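/- arXiv:2406.00435 — 2 statements merged into one kernel-verified Lean document; each statement's English description precedes it below -/
import Mathlib

section
/- The composition of a PSAHARA utility with an increasing continuous piecewise linear function is again a PSAHARA utility: if U is continuous, increasing, and equal to a positive affine transformation of a SAHARA utility on each interval of some finite partition of ℝ, and h : ℝ → ℝ is increasing, continuous, and piecewise affine with finitely many pieces, then U ∘ h has the same structure with respect to some finite partition of ℝ. -/
open Real

/-- The SAHARA utility with parameters `α, β, d`. -/
noncomputable def saharaU (α β d x : ℝ) : ℝ :=
  -(1 / (α ^ 2 - 1)) * ((x - d) + Real.sqrt (β ^ 2 + (x - d) ^ 2)) ^ (-α)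
    * ((x - d) + α * Real.sqrt (β ^ 2 + (x - d) ^ 2))

/-- `U` is a PSAHARA utility: increasing, continuous, and on each open interval of a finite
partition `⊥ = A 0 < A 1 < ⋯ < A (n+1) = ⊤` of the real line, `U` is a positive affine
transformation of a SAHARA utility. -/
def IsPSAHARA (U : ℝ → ℝ) : Prop :=
  StrictMono U ∧ Continuous U ∧
  ∃ (n : ℕ) (A : Fin (n + 2) → EReal) (αp βp dp γp up : Fin (n + 1) → ℝ),
    StrictMono A ∧ A 0 = ⊥ ∧ A (Fin.last (n + 1)) = ⊤ ∧
    (∀ k, 0 < αp k ∧ αp k ≠ 1 ∧ 0 < βp k ∧ 0 < γp k) ∧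
    ∀ (k : Fin (n + 1)) (x : ℝ), A k.castSucc < (x : EReal) → (x : EReal) < A k.succ →
      U x = γp k * saharaU (αp k) (βp k) (dp k) x + up k

/-- `h` is piecewise affine with finitely many pieces. -/
def IsPiecewiseAffine (h : ℝ → ℝ) : Prop :=
  ∃ (n : ℕ) (A : Fin (n + 2) → EReal) (c b : Fin (n + 1) → ℝ),
    StrictMono A ∧ A 0 = ⊥ ∧ A (Fin.last (n + 1)) = ⊤ ∧
    ∀ (k : Fin (n + 1)) (x : ℝ), A k.castSucc < (x : EReal) → (x : EReal) < A k.succ →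
      h x = c k * x + b k

/-! On a piece where `h x = c * x + b` with `c > 0`, a positive affine transformation of
`saharaU α β d` composed with `h` is a positive affine transformation of
`saharaU α (β / c) ((d - b) / c)`. Being a strictly increasing continuous bijection of `ℝ`, `h`
pulls the breakpoints of `U` back to a finite partition; on each piece of the common refinement
of that partition with the breakpoints of `h`, both local descriptions hold. -/

open Set Filter

lemma exists_le_and_le_of_forall_notMem_Ioo {α : Type*} [LinearOrder α] {n : ℕ}
    {A : Fin (n + 2) → α} {a b : α} (h0 : A 0 ≤ a) (hlast : b ≤ A (Fin.last (n + 1)))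
    (hab : a < b) (hgap : ∀ i, A i ∉ Ioo a b) :
    ∃ k : Fin (n + 1), A k.castSucc ≤ a ∧ b ≤ A k.succ := by
  by_contra! hne
  have hle : ∀ i, A i ≤ a := fun i =>
    Fin.induction h0 (fun i hi => not_lt.1 fun hlt => hgap i.succ ⟨hlt, hne i hi⟩) i
  exact (hlast.trans (hle _)).not_gt hab

lemma Finset.notMem_Ioo_orderEmbOfFin {α : Type*} [LinearOrder α] {s : Finset α} {n : ℕ}
    (h : s.card = n + 1) (k : Fin n) {t : α} (ht : t ∈ s) :
    t ∉ Set.Ioo (s.orderEmbOfFin h k.castSucc) (s.orderEmbOfFin h k.succ) := by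
  obtain ⟨i, rfl⟩ : t ∈ Set.range (s.orderEmbOfFin h) := by rwa [Finset.range_orderEmbOfFin]
  rintro ⟨h₁, h₂⟩
  exact (Fin.castSucc_lt_iff_succ_le.1 ((s.orderEmbOfFin h).lt_iff_lt.1 h₁)).not_gt
    ((s.orderEmbOfFin h).lt_iff_lt.1 h₂)

lemma saharaU_mul_add (α β d b : ℝ) {c : ℝ} (hc : 0 < c) (x : ℝ) :
    saharaU α β d (c * x + b) = c * c ^ (-α) * saharaU α (β / c) ((d - b) / c) x := by
  set y := x - (d - b) / c
  have hy : c * x + b - d = c * y := by simp only [y]; field_simp; ring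
  set s := √((β / c) ^ 2 + y ^ 2)
  have hs : √(β ^ 2 + (c * y) ^ 2) = c * s := by
    rw [show β ^ 2 + (c * y) ^ 2 = c ^ 2 * ((β / c) ^ 2 + y ^ 2) by field_simp,
      Real.sqrt_mul (sq_nonneg c), Real.sqrt_sq hc.le]
  -- `|y| ≤ s`, so the base of the power is nonnegative
  have hys : 0 ≤ y + s := neg_le_iff_add_nonneg.1 (abs_le.1 (Real.abs_le_sqrt (by nlinarith))).1
  unfold saharaU
  rw [hy, hs, ← mul_add, Real.mul_rpow hc.le hys]
  ring

def IsPiecewise (P : Set ℝ → Prop) : Prop :=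
  ∃ (n : ℕ) (A : Fin (n + 2) → EReal), StrictMono A ∧ A 0 = ⊥ ∧ A (Fin.last (n + 1)) = ⊤ ∧
    ∀ k : Fin (n + 1), P ((↑) ⁻¹' Ioo (A k.castSucc) (A k.succ))

lemma IsPiecewise.mono {P Q : Set ℝ → Prop} (hP : IsPiecewise P) (hPQ : ∀ s, P s → Q s) :
    IsPiecewise Q :=
  let ⟨n, A, hA, hA0, hAl, hPA⟩ := hP
  ⟨n, A, hA, hA0, hAl, fun k => hPQ _ (hPA k)⟩

lemma IsPiecewise.and {P Q : Set ℝ → Prop} (hPa : Antitone P) (hQa : Antitone Q)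
    (hP : IsPiecewise P) (hQ : IsPiecewise Q) : IsPiecewise fun s => P s ∧ Q s := by
  classical
  obtain ⟨m, A, -, hA0, hAl, hPA⟩ := hP
  obtain ⟨n, B, -, hB0, hBl, hQB⟩ := hQ
  set T : Finset EReal := Finset.univ.image A ∪ Finset.univ.image B
  have hAT (i) : A i ∈ T :=
    Finset.mem_union_left _ (Finset.mem_image_of_mem _ (Finset.mem_univ i))
  have hBT (i) : B i ∈ T :=
    Finset.mem_union_right _ (Finset.mem_image_of_mem _ (Finset.mem_univ i))
  have hcard : T.card = T.card - 2 + 2 := by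
    have : 1 < T.card := Finset.one_lt_card.2 ⟨_, hA0 ▸ hAT 0, _, hAl ▸ hAT _, bot_ne_top⟩
    omega
  set E := T.orderEmbOfFin hcard
  have hrange {t} (ht : t ∈ T) : ∃ i, E i = t := by
    rwa [← Finset.mem_coe, ← Finset.range_orderEmbOfFin T hcard] at ht
  refine ⟨_, E, E.strictMono, ?_, ?_, fun k => ?_⟩
  · obtain ⟨i, hi⟩ := hrange (hA0 ▸ hAT 0)
    exact le_bot_iff.1 (hi ▸ E.monotone (Fin.zero_le i))
  · obtain ⟨i, hi⟩ := hrange (hAl ▸ hAT _)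
    exact top_le_iff.1 (hi ▸ E.monotone (Fin.le_last i))
  · have hE := E.strictMono k.castSucc_lt_succ
    obtain ⟨i, hi₁, hi₂⟩ := exists_le_and_le_of_forall_notMem_Ioo (hA0 ▸ bot_le) (hAl ▸ le_top) hE
      fun i => T.notMem_Ioo_orderEmbOfFin hcard k (hAT i)
    obtain ⟨j, hj₁, hj₂⟩ := exists_le_and_le_of_forall_notMem_Ioo (hB0 ▸ bot_le) (hBl ▸ le_top) hE
      fun j => T.notMem_Ioo_orderEmbOfFin hcard k (hBT j)
    exact ⟨hPa (preimage_mono (Ioo_subset_Ioo hi₁ hi₂)) (hPA i),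
      hQa (preimage_mono (Ioo_subset_Ioo hj₁ hj₂)) (hQB j)⟩

lemma IsPiecewise.image_orderIso {P : Set ℝ → Prop} (hP : IsPiecewise P) (e : ℝ ≃o ℝ) :
    IsPiecewise fun s => P (e '' s) := by
  obtain ⟨n, A, hA, hA0, hAl, hPA⟩ := hP
  -- `EReal` is `WithBot (WithTop ℝ)`: this extends `e` by fixing `⊥` and `⊤`
  let E : EReal ≃o EReal := e.withTopCongr.withBotCongr
  refine ⟨n, E.symm ∘ A, E.symm.strictMono.comp hA, by simp [hA0], by simp [hAl], fun k => ?_⟩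
  convert hPA k using 1
  ext y
  simp only [e.image_eq_preimage_symm, mem_preimage, mem_Ioo, Function.comp_apply]
  exact and_congr (E.symm.lt_iff_lt (y := (y : EReal))) (E.symm.lt_iff_lt (x := (y : EReal)))

lemma IsPiecewise.exists_mem_atTop {P : Set ℝ → Prop} (hP : IsPiecewise P) :
    ∃ s ∈ atTop, P s := by
  obtain ⟨n, A, hA, -, hAl, hPA⟩ := hP
  obtain ⟨x, hx, -⟩ := EReal.exists_between_coe_real (hA (Fin.last n).castSucc_lt_succ)
  refine ⟨_, mem_of_superset (Ioi_mem_atTop x) fun y hy => ?_, hPA (Fin.last n)⟩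
  rw [mem_preimage, Fin.succ_last, hAl]
  exact ⟨hx.trans (EReal.coe_lt_coe_iff.2 hy), EReal.coe_lt_top y⟩

lemma IsPiecewise.exists_mem_atBot {P : Set ℝ → Prop} (hP : IsPiecewise P) :
    ∃ s ∈ atBot, P s := by
  obtain ⟨n, A, hA, hA0, -, hPA⟩ := hP
  obtain ⟨x, -, hx⟩ := EReal.exists_between_coe_real (hA (0 : Fin (n + 1)).castSucc_lt_succ)
  refine ⟨_, mem_of_superset (Iio_mem_atBot x) fun y hy => ?_, hPA 0⟩
  rw [mem_preimage, Fin.castSucc_zero, hA0]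
  exact ⟨EReal.bot_lt_coe y, (EReal.coe_lt_coe_iff.2 hy).trans hx⟩

def IsSaharaOn (U : ℝ → ℝ) (s : Set ℝ) : Prop :=
  ∃ α β d γ u : ℝ, (0 < α ∧ α ≠ 1 ∧ 0 < β ∧ 0 < γ) ∧ ∀ x ∈ s, U x = γ * saharaU α β d x + u

def IsIncreasingAffineOn (h : ℝ → ℝ) (s : Set ℝ) : Prop :=
  ∃ c > 0, ∃ b : ℝ, EqOn h (fun x => c * x + b) s

lemma antitone_isSaharaOn (U : ℝ → ℝ) : Antitone (IsSaharaOn U) :=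
  fun _ _ hst ⟨α, β, d, γ, u, hpar, hU⟩ => ⟨α, β, d, γ, u, hpar, fun x hx => hU x (hst hx)⟩

lemma antitone_isIncreasingAffineOn (h : ℝ → ℝ) : Antitone (IsIncreasingAffineOn h) :=
  fun _ _ hst ⟨c, hc, b, hh⟩ => ⟨c, hc, b, hh.mono hst⟩

lemma IsSaharaOn.comp_isIncreasingAffineOn {U h : ℝ → ℝ} {s : Set ℝ} (hU : IsSaharaOn U (h '' s))
    (hh : IsIncreasingAffineOn h s) : IsSaharaOn (U ∘ h) s := by
  obtain ⟨α, β, d, γ, u, ⟨hα, hα1, hβ, hγ⟩, hUs⟩ := hU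
  obtain ⟨c, hc, b, hhs⟩ := hh
  refine ⟨α, β / c, (d - b) / c, γ * (c * c ^ (-α)), u,
    ⟨hα, hα1, by positivity, by positivity⟩, fun x hx => ?_⟩
  rw [Function.comp_apply, hUs _ (mem_image_of_mem h hx), hhs hx, saharaU_mul_add _ _ _ _ hc]
  ring

lemma isPSAHARA_iff {U : ℝ → ℝ} :
    IsPSAHARA U ↔ StrictMono U ∧ Continuous U ∧ IsPiecewise (IsSaharaOn U) := by
  refine and_congr_right' (and_congr_right' ⟨?_, ?_⟩)
  · rintro ⟨n, A, αp, βp, dp, γp, up, hA, hA0, hAl, hpar, hU⟩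
    exact ⟨n, A, hA, hA0, hAl, fun k => ⟨αp k, βp k, dp k, γp k, up k, hpar k,
      fun x hx => hU k x hx.1 hx.2⟩⟩
  · rintro ⟨n, A, hA, hA0, hAl, hU⟩
    choose αp βp dp γp up hpar hUk using hU
    exact ⟨n, A, αp, βp, dp, γp, up, hA, hA0, hAl, hpar,
      fun k x h₁ h₂ => hUk k x ⟨h₁, h₂⟩⟩

lemma slope_pos_of_strictMono {h : ℝ → ℝ} (hmono : StrictMono h) {s : Set ℝ} {c b x y : ℝ}
    (hh : EqOn h (fun x => c * x + b) s) (hx : x ∈ s) (hy : y ∈ s) (hxy : x < y) : 0 < c := by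
  have := hmono hxy
  rw [hh hx, hh hy] at this
  nlinarith

lemma IsPiecewiseAffine.isPiecewise {h : ℝ → ℝ} (hpl : IsPiecewiseAffine h)
    (hmono : StrictMono h) : IsPiecewise (IsIncreasingAffineOn h) := by
  obtain ⟨n, A, c, b, hA, hA0, hAl, hh⟩ := hpl
  refine ⟨n, A, hA, hA0, hAl, fun k => ?_⟩
  have hhk : EqOn h (fun x => c k * x + b k) ((↑) ⁻¹' Ioo (A k.castSucc) (A k.succ)) :=
    fun x hx => hh k x hx.1 hx.2
  obtain ⟨x, hx, hxA⟩ := EReal.exists_between_coe_real (hA k.castSucc_lt_succ)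
  obtain ⟨y, hxy, hy⟩ := EReal.exists_between_coe_real hxA
  exact ⟨c k, slope_pos_of_strictMono hmono hhk ⟨hx, hxy.trans hy⟩ ⟨hx.trans hxy, hy⟩
    (EReal.coe_lt_coe_iff.1 hxy), b k, hhk⟩

lemma IsPiecewise.surjective {h : ℝ → ℝ} (hcont : Continuous h)
    (hh : IsPiecewise (IsIncreasingAffineOn h)) : Function.Surjective h := by
  obtain ⟨s, hs, c, hc, b, hhs⟩ := hh.exists_mem_atTop
  obtain ⟨t, ht, c', hc', b', hht⟩ := hh.exists_mem_atBot
  refine hcont.surjective ((tendsto_congr' (hhs.eventuallyEq_of_mem hs)).2 ?_)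
    ((tendsto_congr' (hht.eventuallyEq_of_mem ht)).2 ?_)
  · exact tendsto_atTop_add_const_right _ _ (tendsto_id.const_mul_atTop hc)
  · exact tendsto_atBot_add_const_right _ _ (tendsto_id.const_mul_atBot hc')

/-- The composition of a PSAHARA utility with an increasing continuous piecewise linear
function is again a PSAHARA utility. -/
theorem psahara_comp (U h : ℝ → ℝ) (hU : IsPSAHARA U)
    (hmono : StrictMono h) (hcont : Continuous h) (hpl : IsPiecewiseAffine h) :
    IsPSAHARA (U ∘ h) := by
  obtain ⟨hUmono, hUcont, hUp⟩ := isPSAHARA_iff.1 hU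
  have hhp := hpl.isPiecewise hmono
  let e := hmono.orderIsoOfSurjective h (hhp.surjective hcont)
  have hpieces : IsPiecewise fun s => IsSaharaOn U (e '' s) ∧ IsIncreasingAffineOn h s :=
    (hUp.image_orderIso e).and ((antitone_isSaharaOn U).comp_monotone monotone_image)
      (antitone_isIncreasingAffineOn h) hhp
  exact isPSAHARA_iff.2 ⟨hUmono.comp hmono, hUcont.comp hcont,
    hpieces.mono fun s hs => hs.1.comp_isIncreasingAffineOn hs.2⟩
end

section
/- Let U : ℝ → ℝ be continuous and let U** be its concave envelope (the smallest continuous concave function dominating U). Then the set A = {x ∈ ℝ : U(x) ≠ U**(x)} is open, and U** is affine on each connected component of A. -/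
/-!
Where `U < E`, continuity gives an interval `[p, r]` on which `U` stays below both `E p` and
`E r`, hence below the chord of `E` over `[p, r]`; outside `[p, r]` that chord lies above `E`
by concavity. So the chord is a continuous concave majorant of `U`, minimality forces `E` below
it, and concavity forces `E` above it on `[p, r]`: `E` is affine near every point where `U < E`.
A locally affine function on a connected open set is affine, its derivative being locally
constant.
-/

open Real

/-- `E` is the concave envelope of `U` on ℝ: the smallest continuous concave function
dominating `U`. -/
def IsConcaveEnvelope (U E : ℝ → ℝ) : Prop :=
  Continuous E ∧ ConcaveOn ℝ Set.univ E ∧ (∀ x, U x ≤ E x) ∧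
  ∀ h : ℝ → ℝ, Continuous h → ConcaveOn ℝ Set.univ h → (∀ x, U x ≤ h x) →
    ∀ x, E x ≤ h x

open Set Filter Topology

section Chord

variable {𝕜 : Type*} [Field 𝕜]

def chord (f : 𝕜 → 𝕜) (p r : 𝕜) (y : 𝕜) : 𝕜 := slope f p r * (y - p) + f p

variable {f : 𝕜 → 𝕜} {p r : 𝕜}

theorem chord_left : chord f p r p = f p := by simp [chord]

theorem chord_right : chord f p r r = f r := by
  simpa [chord, mul_comm] using sub_smul_slope_vadd f p r

theorem concaveOn_chord [LinearOrder 𝕜] [IsStrictOrderedRing 𝕜] :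
    ConcaveOn 𝕜 univ (chord f p r) := by
  refine ⟨convex_univ, fun x _ y _ α β _ _ hαβ => le_of_eq ?_⟩
  simp only [chord, smul_eq_mul]
  linear_combination (f p - slope f p r * p) * hαβ

variable [LinearOrder 𝕜] [IsStrictOrderedRing 𝕜] {s : Set 𝕜} {y : 𝕜}

theorem ConcaveOn.chord_le_of_mem_Icc (hf : ConcaveOn 𝕜 s f) (hp : p ∈ s) (hr : r ∈ s)
    (hy : y ∈ s) (hyI : y ∈ Icc p r) : chord f p r y ≤ f y := by
  rcases hyI.1.eq_or_lt with rfl | hpy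
  · exact chord_left.le
  have hslope : slope f p r ≤ slope f p y :=
    hf.slope_anti hp ⟨hy, hpy.ne'⟩ ⟨hr, (hpy.trans_le hyI.2).ne'⟩ hyI.2
  calc chord f p r y ≤ chord f p y y := by
        simp only [chord]; gcongr
    _ = f y := chord_right

theorem ConcaveOn.le_chord_of_notMem_Ioo (hf : ConcaveOn 𝕜 s f) (hp : p ∈ s) (hr : r ∈ s)
    (hy : y ∈ s) (hpr : p < r) (hyI : y ∉ Ioo p r) : f y ≤ chord f p r y := by
  rcases lt_trichotomy y p with hyp | rfl | hpy
  · have hslope : slope f p r ≤ slope f p y :=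
      hf.slope_anti hp ⟨hy, hyp.ne⟩ ⟨hr, hpr.ne'⟩ (hyp.trans hpr).le
    calc f y = chord f p y y := chord_right.symm
      _ ≤ chord f p r y :=
        add_le_add_left (mul_le_mul_of_nonpos_right hslope (sub_nonpos.2 hyp.le)) _
  · exact chord_left.ge
  · have hry : r ≤ y := not_lt.1 fun h => hyI ⟨hpy, h⟩
    have hslope : slope f p y ≤ slope f p r :=
      hf.slope_anti hp ⟨hr, hpr.ne'⟩ ⟨hy, hpy.ne'⟩ hry
    calc f y = chord f p y y := chord_right.symm
      _ ≤ chord f p r y := by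
        simp only [chord]; gcongr

end Chord

namespace IsConcaveEnvelope

variable {U E : ℝ → ℝ}

theorem eqOn_chord (hE : IsConcaveEnvelope U E) {p r : ℝ} (hpr : p < r)
    (hUle : ∀ y ∈ Icc p r, U y ≤ chord E p r y) : EqOn E (chord E p r) (Icc p r) := by
  obtain ⟨-, hconc, hUE, hmin⟩ := hE
  have hmaj : ∀ y, U y ≤ chord E p r y := fun y => by
    by_cases hy : y ∈ Icc p r
    · exact hUle y hy
    · exact (hUE y).trans (hconc.le_chord_of_notMem_Ioo trivial trivial trivial hpr
        fun h => hy (Ioo_subset_Icc_self h))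
  have hcont : Continuous (chord E p r) := by unfold chord; fun_prop
  exact fun y hy => le_antisymm (hmin _ hcont concaveOn_chord hmaj y)
    (hconc.chord_le_of_mem_Icc trivial trivial trivial hy)

theorem eventually_eq_affine (hU : Continuous U) (hE : IsConcaveEnvelope U E) {q : ℝ}
    (hq : U q ≠ E q) : ∃ a b : ℝ, ∀ᶠ y in 𝓝 q, E y = a * y + b := by
  obtain ⟨m, hUm, hmE⟩ := exists_between ((hE.2.2.1 q).lt_of_ne hq)
  have hnhds : ∀ᶠ y in 𝓝 q, U y < m ∧ m < E y :=
    ((hU.tendsto q).eventually (gt_mem_nhds hUm)).and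
      ((hE.1.tendsto q).eventually (lt_mem_nhds hmE))
  obtain ⟨p, r, -, hIcc, hsub⟩ := exists_Icc_mem_subset_of_mem_nhds hnhds
  have hpr : p < r := by
    obtain ⟨hpq, hqr⟩ := Icc_mem_nhds_iff.1 hIcc
    exact hpq.trans hqr
  have hUchord : ∀ y ∈ Icc p r, U y ≤ chord E p r y := fun y hy => by
    have hends := (concaveOn_chord (f := E) (p := p) (r := r)).min_le_of_mem_Icc trivial trivial hy
    rw [chord_left, chord_right] at hends
    have hp := (hsub (left_mem_Icc.2 hpr.le)).2
    have hr := (hsub (right_mem_Icc.2 hpr.le)).2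
    linarith [(hsub hy).1, lt_min hp hr, hends]
  refine ⟨slope E p r, E p - slope E p r * p, mem_of_superset hIcc fun y hy =>
    (eqOn_chord hE hpr hUchord hy).trans (by rw [chord]; ring)⟩

end IsConcaveEnvelope

theorem IsOpen.exists_affine_of_eventually_affine {𝕜 : Type*} [RCLike 𝕜] {f : 𝕜 → 𝕜}
    {s : Set 𝕜} (hs : IsOpen s) (hs' : IsPreconnected s)
    (hf : ∀ y ∈ s, ∃ a b : 𝕜, ∀ᶠ z in 𝓝 y, f z = a * z + b) :
    ∃ a b : 𝕜, ∀ y ∈ s, f y = a * y + b := by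
  have hdiff : DifferentiableOn 𝕜 f s := fun y hy => by
    obtain ⟨a, b, h⟩ := hf y hy
    exact ((differentiableAt_id.const_mul a).add_const b).congr_of_eventuallyEq h
      |>.differentiableWithinAt
  have hderiv : ∀ y ∈ s, ∃ a : 𝕜, deriv f =ᶠ[𝓝 y] fun _ => a := fun y hy => by
    obtain ⟨a, b, h⟩ := hf y hy
    refine ⟨a, h.eventually_nhds.mono fun z hz => ?_⟩
    rw [Filter.EventuallyEq.deriv_eq hz]
    simp
  obtain ⟨a, ha⟩ : ∃ a : 𝕜, ∀ y ∈ s, deriv f y = a := by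
    refine hs.exists_is_const_of_deriv_eq_zero hs' (fun y hy => ?_) (fun y hy => ?_)
    · obtain ⟨a, h⟩ := hderiv y hy
      exact (differentiableAt_const a).congr_of_eventuallyEq h |>.differentiableWithinAt
    · obtain ⟨a, h⟩ := hderiv y hy
      simp [h.deriv_eq]
  obtain ⟨b, hb⟩ := hs.exists_eq_add_of_deriv_eq hs' hdiff
    (differentiableOn_id.const_mul a) fun y hy => by simp [ha y hy]
  exact ⟨a, b, hb⟩

/-- The set where a continuous function differs from its concave envelope is open, and the
concave envelope is affine on each connected component of this set. -/
theorem concaveEnvelope_affine_on_components (U E : ℝ → ℝ)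
    (hU : Continuous U) (hE : IsConcaveEnvelope U E) :
    IsOpen {x : ℝ | U x ≠ E x} ∧
    ∀ x ∈ {x : ℝ | U x ≠ E x}, ∃ a b : ℝ,
      ∀ y ∈ connectedComponentIn {x : ℝ | U x ≠ E x} x, E y = a * y + b := by
  have hA : IsOpen {x : ℝ | U x ≠ E x} := (isClosed_eq hU hE.1).isOpen_compl
  exact ⟨hA, fun x _ => hA.connectedComponentIn.exists_affine_of_eventually_affine
    isPreconnected_connectedComponentIn fun y hy =>
      hE.eventually_eq_affine hU (connectedComponentIn_subset _ _ hy)⟩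
end
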